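/- Let X₀ be a real n × m₀ matrix and X₁ a real n × m₁ matrix, let X = [X₀, X₁] be the n × (m₀ + m₁) matrix obtained by concatenating their columns, and set m = m₀ + m₁. Assume that XᵀX and X₀ᵀX₀ are invertible. Then the matrix P = R_{X₀} − R_X satisfies: (1) P is symmetric (Pᵀ = P); (2) P is idempotent (P² = P); (3) P is positive semidefinite; and (4) rank(P) = m₁. -/

import Mathlib

open Matrix

/-- The residual-forming matrix `R_A = I - A (Aᵀ A)⁻¹ Aᵀ` of a matrix `A`. -/
noncomputable def residualMatrix {n k : Type*} [Fintype n] [Fintype k] [DecidableEq n]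
    [DecidableEq k] (A : Matrix n k ℝ) : Matrix n n ℝ :=
  1 - A * (Aᵀ * A)⁻¹ * Aᵀ

/-!
Write `R_A = 1 - H_A` with the hat matrix `H_A = A (AᵀA)⁻¹ Aᵀ`, the orthogonal projection
onto the column space of `A`. Then `P = H_X - H_{X₀}`, and since the columns of `X₀` lie in the
column space of `X`, `H_X H_{X₀} = H_{X₀}`; hence `P` is again an orthogonal projection, which
makes it symmetric, idempotent and positive semidefinite. The rank of an idempotent matrix is
its trace, and `tr H_A = tr ((AᵀA)⁻¹ AᵀA)` is the number of columns of `A`, so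
`rank P = (m₀ + m₁) - m₀`.
-/

theorem Matrix.IsIdempotentElem.rank_eq_trace {m K : Type*} [Fintype m] [DecidableEq m]
    [Field K] {A : Matrix m m K} (hA : IsIdempotentElem A) : (A.rank : K) = A.trace := by
  have hproj : IsIdempotentElem A.mulVecLin := by
    rw [IsIdempotentElem, Module.End.mul_eq_comp, ← mulVecLin_mul, hA.eq]
  rw [Matrix.rank, ← (LinearMap.IsIdempotentElem.isProj_range _ hproj).trace,
    ← Matrix.trace_toLin'_eq, Matrix.toLin'_apply']

open scoped ComplexOrder in
theorem Matrix.IsStarProjection.posSemidef {m 𝕜 : Type*} [Fintype m] [RCLike 𝕜]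
    {A : Matrix m m 𝕜} (hA : IsStarProjection A) : A.PosSemidef := by
  have h := posSemidef_conjTranspose_mul_self A
  rwa [← star_eq_conjTranspose, hA.isSelfAdjoint.star_eq, hA.isIdempotentElem.eq] at h

section hatMatrix

variable {n k l : Type*} [Fintype n] [Fintype k] [DecidableEq k]

noncomputable def hatMatrix (A : Matrix n k ℝ) : Matrix n n ℝ :=
  A * (Aᵀ * A)⁻¹ * Aᵀ

theorem residualMatrix_eq_one_sub_hatMatrix [DecidableEq n] (A : Matrix n k ℝ) :
    residualMatrix A = 1 - hatMatrix A :=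
  rfl

theorem hatMatrix_transpose (A : Matrix n k ℝ) : (hatMatrix A)ᵀ = hatMatrix A := by
  rw [hatMatrix, transpose_mul, transpose_mul, transpose_transpose, transpose_nonsing_inv,
    transpose_mul, transpose_transpose, Matrix.mul_assoc]

theorem hatMatrix_mul_cancel {A : Matrix n k ℝ} (hA : IsUnit (Aᵀ * A)) :
    hatMatrix A * A = A := by
  simp only [hatMatrix, Matrix.mul_assoc]
  rw [nonsing_inv_mul _ ((isUnit_iff_isUnit_det _).mp hA), Matrix.mul_one]

theorem hatMatrix_mul_hatMatrix_of_hatMatrix_mul [Fintype l] [DecidableEq l]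
    {A : Matrix n k ℝ} {B : Matrix n l ℝ} (hB : hatMatrix A * B = B) :
    hatMatrix A * hatMatrix B = hatMatrix B := by
  simp only [hatMatrix, ← Matrix.mul_assoc] at hB ⊢
  rw [hB]

theorem isStarProjection_hatMatrix {A : Matrix n k ℝ} (hA : IsUnit (Aᵀ * A)) :
    IsStarProjection (hatMatrix A) where
  isIdempotentElem := hatMatrix_mul_hatMatrix_of_hatMatrix_mul (hatMatrix_mul_cancel hA)
  isSelfAdjoint := by
    rw [IsSelfAdjoint, star_eq_conjTranspose, conjTranspose_eq_transpose_of_trivial,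
      hatMatrix_transpose]

theorem trace_hatMatrix {A : Matrix n k ℝ} (hA : IsUnit (Aᵀ * A)) :
    (hatMatrix A).trace = Fintype.card k := by
  rw [hatMatrix, trace_mul_comm, ← Matrix.mul_assoc,
    mul_nonsing_inv _ ((isUnit_iff_isUnit_det _).mp hA), trace_one]

theorem hatMatrix_fromCols_mul_left [Fintype l] [DecidableEq l] {A : Matrix n k ℝ}
    {B : Matrix n l ℝ} (h : IsUnit ((fromCols A B)ᵀ * fromCols A B)) :
    hatMatrix (fromCols A B) * A = A := by
  have hAB := hatMatrix_mul_cancel h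
  rw [mul_fromCols, fromCols_ext_iff] at hAB
  exact hAB.1

end hatMatrix

/-- With `X = [X₀, X₁]` and `XᵀX`, `X₀ᵀX₀` invertible, the matrix
`P = R_{X₀} − R_X` is symmetric, idempotent, positive semidefinite, and has rank `m₁`. -/
theorem stmt_4 {n m0 m1 : ℕ}
    (X0 : Matrix (Fin n) (Fin m0) ℝ) (X1 : Matrix (Fin n) (Fin m1) ℝ)
    (X : Matrix (Fin n) (Fin m0 ⊕ Fin m1) ℝ) (hX : X = fromCols X0 X1)
    (hXinv : IsUnit (Xᵀ * X)) (hX0inv : IsUnit (X0ᵀ * X0))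
    (P : Matrix (Fin n) (Fin n) ℝ)
    (hP : P = residualMatrix X0 - residualMatrix X) :
    Pᵀ = P ∧ P * P = P ∧ P.PosSemidef ∧ P.rank = m1 := by
  have hPhat : P = hatMatrix X - hatMatrix X0 := by
    rw [hP, residualMatrix_eq_one_sub_hatMatrix, residualMatrix_eq_one_sub_hatMatrix]
    abel
  have hXX0 : hatMatrix X * hatMatrix X0 = hatMatrix X0 :=
    hatMatrix_mul_hatMatrix_of_hatMatrix_mul (hX ▸ hatMatrix_fromCols_mul_left (hX ▸ hXinv))
  have hproj : IsStarProjection P := hPhat ▸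
    (isStarProjection_hatMatrix hX0inv).sub_of_mul_eq_right (isStarProjection_hatMatrix hXinv) hXX0
  refine ⟨?_, hproj.isIdempotentElem, hproj.posSemidef, ?_⟩
  · rw [← conjTranspose_eq_transpose_of_trivial, ← star_eq_conjTranspose, hproj.isSelfAdjoint]
  · have hrank : (P.rank : ℝ) = m1 := by
      rw [hproj.isIdempotentElem.rank_eq_trace, hPhat, trace_sub, trace_hatMatrix hXinv,
        trace_hatMatrix hX0inv]
      simp
    exact_mod_cast hrank
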